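/- (Index-zero criterion of type B, k < n.) Let n ≥ 2 and 1 ≤ k ≤ n−1, and let a_1,…,a_n be nonnegative integers. Then for every integer t, one has ⟨w(t), α⟩ > 0 for every positive root α ∈ Φ⁺_B if and only if t ≤ a_k. In particular if a_k = 0 this holds if and only if t < 1. -/

import Mathlib

open Finset

/-- The positive roots of type `Bₙ`: `eₚ+e_q`, `eₚ-e_q` (`p<q`) and `eₚ`. -/
def PhiB (n : ℕ) : Set (Fin n → ℝ) :=
  {α | ∃ p q : Fin n, p < q ∧
      α = fun i => (if i = p then (1:ℝ) else 0) + (if i = q then 1 else 0)} ∪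
  {α | ∃ p q : Fin n, p < q ∧
      α = fun i => (if i = p then (1:ℝ) else 0) - (if i = q then 1 else 0)} ∪
  {α | ∃ p : Fin n, α = fun i => if i = p then (1:ℝ) else 0}

/-- Standard inner product on `ℝⁿ`. -/
noncomputable def ip (n : ℕ) (v w : Fin n → ℝ) : ℝ := ∑ i, v i * w i

/-- The coordinate form of the weight `λ+ρ-tλ_k` for type `Bₙ`, `k < n`
(coordinates are indexed one-based). -/
noncomputable def wB (n k : ℕ) (a : ℕ → ℤ) (t : ℤ) : Fin n → ℝ := fun i =>
  (∑ u ∈ Icc (i.val + 1) (n - 1), (a u : ℝ)) + ((a n : ℝ) + 1) / 2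
    + ((n : ℝ) - (i.val + 1)) - (if i.val + 1 ≤ k then (t : ℝ) else 0)

/-!
A vector pairs positively with every positive root of `Bₙ` exactly when its coordinates are
positive and strictly decreasing. The consecutive differences of `w(t)` are the integers
`aᵢ + 1`, except at `i = k` where it is `a_k + 1 - t`, and its last coordinate is
`(aₙ + 1)/2 > 0`; so `w(t)` is strictly decreasing iff `t ≤ a_k`, and then it is positive.
-/

section PositiveRoots

variable {n : ℕ}

lemma ip_single (v : Fin n → ℝ) (p : Fin n) :
    ip n v (fun i => if i = p then 1 else 0) = v p := by
  simp [ip]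

lemma ip_single_add_single (v : Fin n → ℝ) (p q : Fin n) :
    ip n v (fun i => (if i = p then 1 else 0) + (if i = q then 1 else 0)) = v p + v q := by
  simp [ip, mul_add, Finset.sum_add_distrib]

lemma ip_single_sub_single (v : Fin n → ℝ) (p q : Fin n) :
    ip n v (fun i => (if i = p then 1 else 0) - (if i = q then 1 else 0)) = v p - v q := by
  simp [ip, mul_sub, Finset.sum_sub_distrib]

theorem forall_PhiB_ip_pos_iff (v : Fin n → ℝ) :
    (∀ α ∈ PhiB n, 0 < ip n v α) ↔ StrictAnti v ∧ ∀ i, 0 < v i := by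
  constructor
  · intro h
    refine ⟨fun p q hpq => ?_, fun p => ?_⟩
    · have := h _ (Or.inl (Or.inr ⟨p, q, hpq, rfl⟩))
      rw [ip_single_sub_single] at this
      linarith
    · simpa only [ip_single] using h _ (Or.inr ⟨p, rfl⟩)
  · rintro ⟨hanti, hpos⟩ α ((⟨p, q, -, rfl⟩ | ⟨p, q, hpq, rfl⟩) | ⟨p, rfl⟩)
    · rw [ip_single_add_single]
      exact add_pos (hpos p) (hpos q)
    · rw [ip_single_sub_single, sub_pos]
      exact hanti hpq
    · rw [ip_single]
      exact hpos p

end PositiveRoots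

section Weight

variable {m k : ℕ} {a : ℕ → ℤ} {t : ℤ}

lemma wB_castSucc_sub_wB_succ (i : Fin m) :
    wB (m + 1) k a t i.castSucc - wB (m + 1) k a t i.succ =
      ((a (i + 1) + 1 - if (i : ℕ) + 1 = k then t else 0 : ℤ) : ℝ) := by
  have hIcc : Icc ((i : ℕ) + 1) m = insert ((i : ℕ) + 1) (Icc ((i : ℕ) + 1 + 1) m) :=
    (insert_Icc_add_one_left_eq_Icc (by omega)).symm
  simp only [wB, Fin.val_castSucc, Fin.val_succ, add_tsub_cancel_right, hIcc,
    sum_insert (by simp : (i : ℕ) + 1 ∉ Icc ((i : ℕ) + 1 + 1) m)]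
  rcases lt_trichotomy ((i : ℕ) + 1) k with h | h | h
  · rw [if_pos h.le, if_pos (by omega), if_neg h.ne]; push_cast; ring
  · rw [if_pos h.le, if_neg (by omega), if_pos h]; push_cast; ring
  · rw [if_neg (by omega), if_neg (by omega), if_neg h.ne']; push_cast; ring

lemma wB_last (hkm : k ≤ m) : wB (m + 1) k a t (Fin.last m) = ((a (m + 1) : ℝ) + 1) / 2 := by
  simp only [wB, Fin.val_last, add_tsub_cancel_right, if_neg (show ¬ m + 1 ≤ k by omega),
    Icc_eq_empty (show ¬ m + 1 ≤ m by omega), sum_empty]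
  push_cast
  ring

theorem strictAnti_wB_iff (hk1 : 1 ≤ k) (hkm : k ≤ m) (ha : ∀ u, 1 ≤ u → u ≤ m → 0 ≤ a u) :
    StrictAnti (wB (m + 1) k a t) ↔ t ≤ a k := by
  have step_lt_iff (i : Fin m) : wB (m + 1) k a t i.succ < wB (m + 1) k a t i.castSucc ↔
      0 < a (i + 1) + 1 - if (i : ℕ) + 1 = k then t else 0 := by
    rw [← sub_pos, wB_castSucc_sub_wB_succ, Int.cast_pos]
  simp only [Fin.strictAnti_iff_succ_lt, step_lt_iff]
  constructor
  · intro h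
    have := h ⟨k - 1, by omega⟩
    rw [Nat.sub_add_cancel hk1, if_pos rfl] at this
    omega
  · intro ht i
    split_ifs with h
    · rw [h]
      omega
    · have := ha (i + 1) (by omega) (by omega)
      omega

end Weight

theorem index_zero_criterion_B_lt_general (n k : ℕ) (hk1 : 1 ≤ k) (hkn : k ≤ n - 1)
    (a : ℕ → ℤ) (ha : ∀ u, 1 ≤ u → u ≤ n → 0 ≤ a u) (t : ℤ) :
    ((∀ α ∈ PhiB n, 0 < ip n (wB n k a t) α) ↔ t ≤ a k) ∧
      (a k = 0 → ((∀ α ∈ PhiB n, 0 < ip n (wB n k a t) α) ↔ t < 1)) := by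
  obtain ⟨m, rfl⟩ : ∃ m, n = m + 1 := ⟨n - 1, by omega⟩
  have hkm : k ≤ m := by omega
  have hanti := strictAnti_wB_iff (t := t) hk1 hkm fun u h1 h2 => ha u h1 (by omega)
  have criterion : (∀ α ∈ PhiB (m + 1), 0 < ip (m + 1) (wB (m + 1) k a t) α) ↔ t ≤ a k := by
    rw [forall_PhiB_ip_pos_iff, hanti]
    refine ⟨And.left, fun ht => ⟨ht, fun i => ?_⟩⟩
    have ha_last : (0 : ℝ) ≤ a (m + 1) := by exact_mod_cast ha (m + 1) (by omega) le_rfl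
    calc (0 : ℝ) < ((a (m + 1) : ℝ) + 1) / 2 := by positivity
      _ = wB (m + 1) k a t (Fin.last m) := (wB_last hkm).symm
      _ ≤ wB (m + 1) k a t i := (hanti.2 ht).antitone (Fin.le_last i)
  exact ⟨criterion, fun hak => criterion.trans (by omega)⟩

/-- Index-zero criterion of type `B`, `k < n`: `λ+ρ-tλ_k` is regular of index `0`
iff `t ≤ a_k`; in particular, if `a_k = 0` this happens iff `t < 1`. -/
theorem index_zero_criterion_B_lt (n k : ℕ) (hn : 2 ≤ n) (hk1 : 1 ≤ k) (hkn : k ≤ n - 1)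
    (a : ℕ → ℤ) (ha : ∀ u, 1 ≤ u → u ≤ n → 0 ≤ a u) (t : ℤ) :
    ((∀ α ∈ PhiB n, 0 < ip n (wB n k a t) α) ↔ t ≤ a k) ∧
      (a k = 0 → ((∀ α ∈ PhiB n, 0 < ip n (wB n k a t) α) ↔ t < 1)) :=
  index_zero_criterion_B_lt_general n k hk1 hkn a ha t
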